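/- Let G ⊂ ℂ be open, let h : G → ℂ be holomorphic and injective, and let E ⊂ G be a compact set. Then there exists a constant c ≥ 1 (depending on h, G, E) such that for all w₁, w₂ ∈ E, c⁻¹ · |w₂ − w₁| ≤ |h(w₂) − h(w₁)| ≤ c · |w₂ − w₁|. -/

import Mathlib

/-!
Let `Q(z, w) = (h z - h w) / (z - w)`, extended by `h'` on the diagonal (`dslope`). Since `h` is
`C¹`, strict differentiability makes `Q` continuous on `G × G`, also at diagonal points. It does
not vanish: off the diagonal by injectivity, and on it because an injective holomorphic map has
`h' ≠ 0`: if `h - h a` vanishes to order `n ≥ 2` at `a`, then `h = h a + ψ ^ n` near `a` with `ψ`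
a local homeomorphism at `a`, and `z ↦ z ^ n` is not injective near `0`. So `‖Q‖` and `‖Q‖⁻¹`
are bounded on the compact `E × E`, and `|h w₂ - h w₁| = |Q (w₂, w₁)| |w₂ - w₁|`.
-/

open Filter Topology Set

section DSlope

variable {𝕜 F : Type*} [NontriviallyNormedField 𝕜] [NormedAddCommGroup F] [NormedSpace 𝕜 F]
  {f : 𝕜 → F}

theorem dist_eq_norm_dslope_mul_dist (f : 𝕜 → F) (x y : 𝕜) :
    dist (f x) (f y) = ‖dslope f y x‖ * dist x y := by
  rw [dist_eq_norm, dist_eq_norm, ← sub_smul_dslope f y x, norm_smul, mul_comm]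

theorem dslope_ne_zero_of_injOn {s : Set 𝕜} (hf : InjOn f s) (hf' : ∀ x ∈ s, deriv f x ≠ 0)
    {x y : 𝕜} (hx : x ∈ s) (hy : y ∈ s) : dslope f y x ≠ 0 := by
  obtain rfl | hxy := eq_or_ne x y
  · simpa using hf' x hx
  · simp [dslope_of_ne _ hxy, slope_def_module, sub_eq_zero, hxy, hf.ne_iff hx hy]

theorem HasStrictDerivAt.tendsto_dslope {a : 𝕜} (hf : HasStrictDerivAt f (deriv f a) a)
    (hf' : ContinuousAt (deriv f) a) :
    Tendsto (fun p : 𝕜 × 𝕜 => dslope f p.2 p.1) (𝓝 (a, a)) (𝓝 (deriv f a)) := by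
  have hdiag : Tendsto (fun p : 𝕜 × 𝕜 => dslope f p.2 p.1) (𝓝[{p | p.1 = p.2}] (a, a))
      (𝓝 (deriv f a)) := by
    refine ((hf'.comp (x := (a, a)) continuousAt_fst).tendsto.mono_left
      nhdsWithin_le_nhds).congr' ?_
    filter_upwards [self_mem_nhdsWithin] with p (hp : p.1 = p.2)
    simp [hp]
  have hoff : Tendsto (fun p : 𝕜 × 𝕜 => dslope f p.2 p.1) (𝓝[{p | p.1 ≠ p.2}] (a, a))
      (𝓝 (deriv f a)) := by
    have hlim := (hasDerivAtFilter_iff_isLittleO.mp hf).tendsto_inv_smul_nhds_zero.add_const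
      (deriv f a)
    rw [zero_add] at hlim
    refine (hlim.mono_left nhdsWithin_le_nhds).congr' ?_
    filter_upwards [self_mem_nhdsWithin] with p (hp : p.1 ≠ p.2)
    rw [dslope_of_ne _ hp, slope_def_module, smul_sub, inv_smul_smul₀ (sub_ne_zero.mpr hp),
      sub_add_cancel]
  rw [nhds_eq_nhdsWithin_sup_nhdsWithin _ (union_compl_self {p : 𝕜 × 𝕜 | p.1 = p.2}).symm]
  exact hdiag.sup hoff

theorem IsCompact.exists_bilipschitzOn_of_continuousOn_dslope {K : Set 𝕜} (hK : IsCompact K)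
    (hf : ContinuousOn (fun p : 𝕜 × 𝕜 => dslope f p.2 p.1) (K ×ˢ K))
    (hf₀ : ∀ x ∈ K, ∀ y ∈ K, dslope f y x ≠ 0) :
    ∃ c : ℝ, 1 ≤ c ∧ ∀ x ∈ K, ∀ y ∈ K,
      c⁻¹ * dist x y ≤ dist (f x) (f y) ∧ dist (f x) (f y) ≤ c * dist x y := by
  obtain ⟨M, hM⟩ := (hK.prod hK).exists_bound_of_continuousOn hf
  obtain ⟨M', hM'⟩ := (hK.prod hK).exists_bound_of_continuousOn
    (hf.norm.inv₀ fun p hp => norm_ne_zero_iff.mpr (hf₀ p.1 hp.1 p.2 hp.2))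
  refine ⟨max 1 (max M M'), le_max_left _ _, fun x hx y hy => ?_⟩
  have hupper : ‖dslope f y x‖ ≤ max 1 (max M M') :=
    (hM (x, y) ⟨hx, hy⟩).trans ((le_max_left _ _).trans (le_max_right _ _))
  have hlower : ‖dslope f y x‖⁻¹ ≤ max 1 (max M M') := by
    simpa using (hM' (x, y) ⟨hx, hy⟩).trans ((le_max_right _ _).trans (le_max_right _ _))
  rw [dist_eq_norm_dslope_mul_dist]
  exact ⟨mul_le_mul_of_nonneg_right (inv_le_of_inv_le₀ (norm_pos_iff.mpr (hf₀ x hx y hy)) hlower)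
    dist_nonneg, mul_le_mul_of_nonneg_right hupper dist_nonneg⟩

end DSlope

theorem ContDiffOn.continuousOn_dslope {𝕜 F : Type*} [RCLike 𝕜] [NormedAddCommGroup F]
    [NormedSpace 𝕜 F] {f : 𝕜 → F} {s : Set 𝕜} (hs : IsOpen s) (hf : ContDiffOn 𝕜 1 f s) :
    ContinuousOn (fun p : 𝕜 × 𝕜 => dslope f p.2 p.1) (s ×ˢ s) := by
  rintro ⟨x, y⟩ ⟨hx, hy⟩
  refine ContinuousAt.continuousWithinAt ?_
  obtain rfl | hxy := eq_or_ne x y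
  · rw [ContinuousAt, dslope_same]
    exact ((hf.contDiffAt (hs.mem_nhds hx)).hasStrictDerivAt one_ne_zero).tendsto_dslope
      ((hf.continuousOn_deriv_of_isOpen hs le_rfl).continuousAt (hs.mem_nhds hx))
  · have hslope : ContinuousAt (fun p : 𝕜 × 𝕜 => (p.1 - p.2)⁻¹ • (f p.1 - f p.2)) (x, y) :=
      ((continuousAt_fst.sub continuousAt_snd).inv₀ (sub_ne_zero.mpr hxy)).smul
        (((hf.continuousOn.continuousAt (hs.mem_nhds hx)).comp continuousAt_fst).sub
          ((hf.continuousOn.continuousAt (hs.mem_nhds hy)).comp continuousAt_snd))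
    refine hslope.congr ?_
    filter_upwards [(isOpen_ne_fun continuous_fst continuous_snd).mem_nhds hxy] with p hp
    rw [dslope_of_ne _ hp, slope_def_module]

theorem AnalyticAt.exists_pow_eq {g : ℂ → ℂ} {a : ℂ} (hg : AnalyticAt ℂ g a) (hga : g a ≠ 0)
    {n : ℕ} (hn : n ≠ 0) : ∃ r : ℂ → ℂ, AnalyticAt ℂ r a ∧ ∀ z, r z ^ n = g z := by
  -- normalising by `g a` keeps the base of the principal power near `1`, inside the slit plane
  refine ⟨fun z => g a ^ (n⁻¹ : ℂ) * (g z / g a) ^ (n⁻¹ : ℂ), ?_, fun z => ?_⟩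
  · exact analyticAt_const.mul ((hg.div analyticAt_const hga).cpow analyticAt_const
      (by simp [hga]))
  · rw [mul_pow, Complex.cpow_nat_inv_pow _ hn, Complex.cpow_nat_inv_pow _ hn,
      mul_div_cancel₀ _ hga]

theorem AnalyticAt.exists_eventually_sub_eq_pow {f : ℂ → ℂ} {a : ℂ} {n : ℕ}
    (hf : AnalyticAt ℂ f a) (hn : analyticOrderAt (f · - f a) a = n) :
    ∃ ψ : ℂ → ℂ, ψ a = 0 ∧ map ψ (𝓝 a) = 𝓝 0 ∧ ∀ᶠ z in 𝓝 a, f z - f a = ψ z ^ n := by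
  obtain ⟨g, hg, hga, hfg⟩ := (hf.fun_sub analyticAt_const).analyticOrderAt_eq_natCast.mp hn
  have hn₀ : n ≠ 0 := by
    rintro rfl
    exact hga (by simpa using hfg.self_of_nhds.symm)
  obtain ⟨r, hr, hrg⟩ := hg.exists_pow_eq hga hn₀
  have hra : r a ≠ 0 := fun h => hga (by rw [← hrg, h, zero_pow hn₀])
  have hψ : HasStrictDerivAt (fun z => (z - a) * r z) (r a) a := by
    simpa using HasStrictDerivAt.fun_mul ((hasStrictDerivAt_id a).sub_const a) hr.hasStrictDerivAt
  refine ⟨fun z => (z - a) * r z, by simp, by simpa using hψ.map_nhds_eq hra, ?_⟩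
  filter_upwards [hfg] with z hz
  rw [hz, mul_pow, hrg, smul_eq_mul]

theorem Complex.not_injOn_pow_of_mem_nhds_zero {n : ℕ} (hn : 2 ≤ n) {U : Set ℂ}
    (hU : U ∈ 𝓝 0) : ¬ InjOn (· ^ n) U := by
  obtain ⟨ε, hε, hball⟩ := Metric.mem_nhds_iff.mp hU
  have hζ := Complex.isPrimitiveRoot_exp n (by omega)
  set ζ := Complex.exp (2 * Real.pi * Complex.I / n)
  set w : ℂ := ((ε / 2 : ℝ) : ℂ)
  have hw : w ≠ 0 := by simp [w, hε.ne']
  have hwε : ‖w‖ < ε := by simp [w, abs_of_pos hε]; linarith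
  intro hinj
  have hζw : ζ * w = w :=
    hinj (hball (by simpa [norm_mul, hζ.norm'_eq_one (by omega)] using hwε))
      (hball (by simpa using hwε)) (by simp [mul_pow, hζ.pow_eq_one])
  exact hζ.ne_one (by omega) (mul_left_cancel₀ hw (by rw [mul_comm, hζw, mul_one]))

theorem AnalyticAt.deriv_ne_zero_of_injOn {f : ℂ → ℂ} {a : ℂ} {U : Set ℂ}
    (hf : AnalyticAt ℂ f a) (hU : U ∈ 𝓝 a) (hinj : InjOn f U) : deriv f a ≠ 0 := by
  intro hfa
  have htwo : ((2 : ℕ) : ℕ∞) ≤ analyticOrderAt (f · - f a) a := by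
    rw [natCast_le_analyticOrderAt_iff_iteratedDeriv_eq_zero (hf.fun_sub analyticAt_const)]
    intro i hi
    interval_cases i <;> simp [hfa]
  have hfin : analyticOrderAt (f · - f a) a ≠ ⊤ := by
    rw [Ne, analyticOrderAt_eq_top]
    intro hconst
    obtain ⟨z, ⟨hz, hzU⟩, hza⟩ :=
      ((hconst.and hU).filter_mono nhdsWithin_le_nhds |>.and self_mem_nhdsWithin).exists
        (f := 𝓝[≠] a)
    exact hza (hinj hzU (mem_of_mem_nhds hU) (sub_eq_zero.mp hz))
  obtain ⟨n, hn⟩ := ENat.ne_top_iff_exists.mp hfin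
  obtain ⟨ψ, -, hψ, hfψ⟩ := hf.exists_eventually_sub_eq_pow hn.symm
  refine Complex.not_injOn_pow_of_mem_nhds_zero (n := n) (by exact_mod_cast hn ▸ htwo)
    (hψ ▸ image_mem_map (inter_mem hU hfψ)) ?_
  rintro _ ⟨x, ⟨hxU, hx⟩, rfl⟩ _ ⟨y, ⟨hyU, hy⟩, rfl⟩ hxy
  rw [hinj hxU hyU (sub_left_inj.mp (hx.trans (hxy.trans hy.symm)))]

/-- **Bilipschitz property (3.3).** An injective holomorphic map on an open set
`G ⊆ ℂ` is bilipschitz on every compact subset `E ⊆ G`. -/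
theorem injOn_holomorphic_bilipschitz_on_compact
    (G : Set ℂ) (hG : IsOpen G) (h : ℂ → ℂ) (hh : DifferentiableOn ℂ h G)
    (hinj : InjOn h G) (E : Set ℂ) (hE : IsCompact E) (hEG : E ⊆ G) :
    ∃ c : ℝ, 1 ≤ c ∧ ∀ w₁ ∈ E, ∀ w₂ ∈ E,
      c⁻¹ * dist w₂ w₁ ≤ dist (h w₂) (h w₁) ∧
      dist (h w₂) (h w₁) ≤ c * dist w₂ w₁ := by
  have hderiv : ∀ z ∈ G, deriv h z ≠ 0 := fun z hz =>
    (hh.analyticAt (hG.mem_nhds hz)).deriv_ne_zero_of_injOn (hG.mem_nhds hz) hinj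
  have hcont : ContinuousOn (fun p : ℂ × ℂ => dslope h p.2 p.1) (E ×ˢ E) :=
    ((hh.contDiffOn hG).continuousOn_dslope hG).mono (prod_mono hEG hEG)
  obtain ⟨c, hc, hbound⟩ := hE.exists_bilipschitzOn_of_continuousOn_dslope hcont
    fun x hx y hy => dslope_ne_zero_of_injOn hinj hderiv (hEG hx) (hEG hy)
  exact ⟨c, hc, fun w₁ hw₁ w₂ hw₂ => hbound w₂ hw₂ w₁ hw₁⟩
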